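/- If g ∈ L¹(Ω) for a bounded open set Ω ⊂ ℂ and f(z) = -(2/π)·log|z| for |z| < 1, f(z) = 0 otherwise, then for every exponent q with 0 < q < π/‖g‖₁, the function exp(|f ∗ g|) belongs to L^q(Ω), where ∗ denotes convolution. -/

import Mathlib

open MeasureTheory Metric Set ENNReal

/-- `f(z) = -(2/π) log |z|` for `|z| < 1`, and `f(z) = 0` otherwise. -/
noncomputable def logKernel (z : ℂ) : ℝ :=
  if ‖z‖ < 1 then -(2 / Real.pi) * Real.log ‖z‖ else 0

lemma logKernel_nonneg (z : ℂ) : 0 ≤ logKernel z := by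
  unfold logKernel
  split_ifs with h
  · have h0 : Real.log ‖z‖ ≤ 0 :=
      Real.log_nonpos (norm_nonneg z) h.le
    have h1 : (0:ℝ) < 2 / Real.pi := by positivity
    nlinarith
  · exact le_rfl

lemma measurable_logKernel : Measurable logKernel := by
  unfold logKernel
  apply Measurable.ite
  · exact measurableSet_lt continuous_norm.measurable measurable_const
  · exact (Real.measurable_log.comp continuous_norm.measurable).const_mul _
  · exact measurable_const

lemma exp_mul_logKernel_le {a : ℝ} (ha : 0 ≤ a) {u : ℂ} (hu : u ≠ 0) :
    ENNReal.ofReal (Real.exp (a * logKernel u)) ≤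
      (Metric.ball (0:ℂ) 1).indicator
        (fun v => ENNReal.ofReal (‖v‖ ^ (-(a * (2 / Real.pi))))) u + 1 := by
  by_cases h : ‖u‖ < 1
  · have hpos : 0 < ‖u‖ := norm_pos_iff.mpr hu
    have hexp : Real.exp (a * logKernel u) = ‖u‖ ^ (-(a * (2 / Real.pi))) := by
      rw [Real.rpow_def_of_pos hpos]
      unfold logKernel
      rw [if_pos h]
      ring_nf
    rw [hexp, Set.indicator_of_mem (by simpa [Metric.mem_ball] using h)]
    exact le_self_add
  · unfold logKernel
    rw [if_neg h]
    simp

lemma integrableOn_abs_rpow_neg {γ : ℝ} (hγ : γ < 1) :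
    IntegrableOn (fun x : ℝ => |x| ^ (-γ)) (Set.Ioc (-1 : ℝ) 1) := by
  have h1 : IntegrableOn (fun x : ℝ => x ^ (-γ)) (Set.Ioc (0:ℝ) 1) := by
    have := intervalIntegral.intervalIntegrable_rpow' (a := (0:ℝ)) (b := 1)
      (show (-1:ℝ) < -γ by linarith)
    rwa [intervalIntegrable_iff_integrableOn_Ioc_of_le zero_le_one] at this
  have h2 : IntegrableOn (fun x : ℝ => |x| ^ (-γ)) (Set.Ioc (0:ℝ) 1) := by
    refine h1.congr_fun ?_ measurableSet_Ioc
    intro x hx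
    simp only []
    rw [abs_of_pos hx.1]
  have h3 : IntegrableOn (fun x : ℝ => |x| ^ (-γ)) (Set.Ioc (-1:ℝ) 0) := by
    have h2' : Integrable ((Set.Ioc (0:ℝ) 1).indicator fun x : ℝ => |x| ^ (-γ)) := by
      rwa [integrable_indicator_iff measurableSet_Ioc]
    have h4 := h2'.comp_neg
    have h5 : (fun x : ℝ => (Set.Ioc (0:ℝ) 1).indicator (fun x : ℝ => |x| ^ (-γ)) (-x)) =
        (Set.Ico (-1:ℝ) 0).indicator fun x : ℝ => |x| ^ (-γ) := by
      ext x
      by_cases hx : x ∈ Set.Ico (-1:ℝ) 0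
      · rw [Set.indicator_of_mem hx,
          Set.indicator_of_mem (by constructor <;> [linarith [hx.2]; linarith [hx.1]]), abs_neg]
      · rw [Set.indicator_of_notMem hx, Set.indicator_of_notMem]
        simp only [Set.mem_Ico, not_and_or, not_le, not_lt] at hx
        simp only [Set.mem_Ioc, not_and_or, not_le, not_lt]
        rcases hx with h | h
        · right; linarith
        · left; linarith
    rw [h5] at h4
    have h6 : IntegrableOn (fun x : ℝ => |x| ^ (-γ)) (Set.Ico (-1:ℝ) 0) :=
      (integrable_indicator_iff measurableSet_Ico).mp h4
    exact h6.congr_set_ae Ico_ae_eq_Ioc.symm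
  have := h3.union h2
  rwa [Set.Ioc_union_Ioc_eq_Ioc (by norm_num) (by norm_num)] at this

lemma lintegral_ball_rpow_lt_top {β : ℝ} (hβ0 : 0 ≤ β) (hβ2 : β < 2) :
    ∫⁻ u in Metric.ball (0:ℂ) 1, ENNReal.ofReal (‖u‖ ^ (-β)) < ∞ := by
  set γ : ℝ := β / 2 with hγdef
  have hγ : γ < 1 := by rw [hγdef]; linarith
  set h : ℝ → ℝ≥0∞ := fun x => ENNReal.ofReal (|x| ^ (-γ)) with hhdef
  set S : Set ℂ := Complex.measurableEquivRealProd ⁻¹'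
    (Set.Ioc (-1:ℝ) 1 ×ˢ Set.Ioc (-1:ℝ) 1) with hSdef
  have hmemb : S = {u : ℂ | u.re ∈ Set.Ioc (-1:ℝ) 1 ∧ u.im ∈ Set.Ioc (-1:ℝ) 1} := by
    ext u; rfl
  -- pointwise bound off a null set
  have hnull : volume {u : ℂ | u.re = 0 ∨ u.im = 0} = 0 := by
    have h1 : {u : ℂ | u.re = 0 ∨ u.im = 0} ⊆
        (Complex.measurableEquivRealProd ⁻¹' (({0} : Set ℝ) ×ˢ (Set.univ : Set ℝ))) ∪
        (Complex.measurableEquivRealProd ⁻¹' ((Set.univ : Set ℝ) ×ˢ ({0} : Set ℝ))) := by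
      intro u hu
      rcases hu with h | h
      · exact Or.inl (by simp [Complex.measurableEquivRealProd, h])
      · exact Or.inr (by simp [Complex.measurableEquivRealProd, h])
    refine measure_mono_null h1 ?_
    refine le_antisymm (le_trans (measure_union_le _ _) ?_) zero_le
    have hm := Complex.volume_preserving_equiv_real_prod
    rw [hm.measure_preimage (((measurableSet_singleton (0:ℝ)).prod MeasurableSet.univ).nullMeasurableSet),
      hm.measure_preimage ((MeasurableSet.univ.prod (measurableSet_singleton (0:ℝ))).nullMeasurableSet),
      Measure.volume_eq_prod, Measure.prod_prod, Measure.prod_prod]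
    simp
  have hbound : ∀ u : ℂ, ¬(u.re = 0 ∨ u.im = 0) →
      ENNReal.ofReal (‖u‖ ^ (-β)) ≤ h u.re * h u.im := by
    intro u hu
    push_neg at hu
    have hre : 0 < |u.re| := abs_pos.mpr hu.1
    have him : 0 < |u.im| := abs_pos.mpr hu.2
    have hprod : 0 < |u.re| * |u.im| := mul_pos hre him
    have hle : Real.sqrt (|u.re| * |u.im|) ≤ ‖u‖ := by
      rw [show ‖u‖ = Real.sqrt (‖u‖ ^ 2) from
        (Real.sqrt_sq (norm_nonneg u)).symm]
      apply Real.sqrt_le_sqrt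
      rw [Complex.sq_norm, Complex.normSq_apply]
      nlinarith [sq_nonneg (|u.re| - |u.im|), sq_abs u.re, sq_abs u.im]
    have h2 : ‖u‖ ^ (-β) ≤ Real.sqrt (|u.re| * |u.im|) ^ (-β) :=
      Real.rpow_le_rpow_of_nonpos (Real.sqrt_pos.mpr hprod) hle (by linarith)
    have h3 : Real.sqrt (|u.re| * |u.im|) ^ (-β) = |u.re| ^ (-γ) * |u.im| ^ (-γ) := by
      rw [Real.sqrt_eq_rpow, ← Real.rpow_mul hprod.le,
        show (1/2 : ℝ) * (-β) = -γ by rw [hγdef]; ring, Real.mul_rpow hre.le him.le]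
    calc ENNReal.ofReal (‖u‖ ^ (-β)) ≤
        ENNReal.ofReal (|u.re| ^ (-γ) * |u.im| ^ (-γ)) := by
          rw [← h3]; exact ENNReal.ofReal_le_ofReal h2
      _ = h u.re * h u.im := ENNReal.ofReal_mul (Real.rpow_nonneg (abs_nonneg _) _)
  have hsub : Metric.ball (0:ℂ) 1 ⊆ S := by
    intro u hu
    rw [hmemb]
    rw [Metric.mem_ball, dist_zero_right] at hu
    have h1 := Complex.abs_re_le_norm u
    have h2 := Complex.abs_im_le_norm u
    constructor <;> constructor
    · linarith [neg_abs_le u.re]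
    · linarith [le_abs_self u.re]
    · linarith [neg_abs_le u.im]
    · linarith [le_abs_self u.im]
  have step1 : ∫⁻ u in Metric.ball (0:ℂ) 1, ENNReal.ofReal (‖u‖ ^ (-β)) ≤
      ∫⁻ u in S, h u.re * h u.im := by
    refine le_trans (lintegral_mono_set hsub) (setLIntegral_mono_ae ?_ ?_)
    · fun_prop
    · have hset : {a : ℂ | ¬ a.re = 0 → a.im = 0} = {u : ℂ | u.re = 0 ∨ u.im = 0} := by
        ext u; simp [or_iff_not_imp_left]
      have := (ae_iff (p := fun u : ℂ => ¬(u.re = 0 ∨ u.im = 0))).mpr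
        (by simpa [hset] using hnull)
      filter_upwards [this] with u hu
      exact fun _ => hbound u hu
  have step2 : ∫⁻ u in S, h u.re * h u.im =
      ∫⁻ p in Set.Ioc (-1:ℝ) 1 ×ˢ Set.Ioc (-1:ℝ) 1, h p.1 * h p.2 ∂(volume.prod volume) := by
    rw [hSdef]
    have := Complex.volume_preserving_equiv_real_prod.setLIntegral_comp_preimage_emb
      Complex.measurableEquivRealProd.measurableEmbedding (fun p => h p.1 * h p.2)
      (Set.Ioc (-1:ℝ) 1 ×ˢ Set.Ioc (-1:ℝ) 1)
    rw [← Measure.volume_eq_prod]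
    simpa using this
  have hD : ∫⁻ x in Set.Ioc (-1:ℝ) 1, h x < ∞ :=
    (integrableOn_abs_rpow_neg hγ).setLIntegral_lt_top
  have step3 : ∫⁻ p in Set.Ioc (-1:ℝ) 1 ×ˢ Set.Ioc (-1:ℝ) 1, h p.1 * h p.2 ∂(volume.prod volume) =
      (∫⁻ x in Set.Ioc (-1:ℝ) 1, h x) * ∫⁻ x in Set.Ioc (-1:ℝ) 1, h x := by
    rw [← Measure.prod_restrict]
    exact lintegral_prod_mul (by fun_prop) (by fun_prop)
  calc ∫⁻ u in Metric.ball (0:ℂ) 1, ENNReal.ofReal (‖u‖ ^ (-β)) ≤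
      ∫⁻ u in S, h u.re * h u.im := step1
    _ < ∞ := by rw [step2, step3]; exact ENNReal.mul_lt_top hD hD

lemma inner_bound {a : ℝ} (ha : 0 ≤ a) (Ω : Set ℂ) (w : ℂ) :
    ∫⁻ z in Ω, ENNReal.ofReal (Real.exp (a * logKernel (z - w))) ≤
      (∫⁻ u in Metric.ball (0:ℂ) 1,
        ENNReal.ofReal (‖u‖ ^ (-(a * (2/Real.pi))))) + volume Ω := by
  set F : ℂ → ℝ≥0∞ := (Metric.ball (0:ℂ) 1).indicator
    (fun v => ENNReal.ofReal (‖v‖ ^ (-(a * (2 / Real.pi))))) with hF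
  have hae : ∀ᵐ z ∂(volume.restrict Ω), z - w ≠ 0 := by
    refine ae_restrict_of_ae ?_
    have h0 : volume {z : ℂ | z - w = 0} = 0 := by
      have h1 : {z : ℂ | z - w = 0} = {w} := by ext z; simp [sub_eq_zero]
      rw [h1]; exact measure_singleton w
    rw [ae_iff]; simpa [not_not] using h0
  calc ∫⁻ z in Ω, ENNReal.ofReal (Real.exp (a * logKernel (z - w)))
      ≤ ∫⁻ z in Ω, (F (z - w) + 1) := by
        refine lintegral_mono_ae ?_
        filter_upwards [hae] with z hz
        exact exp_mul_logKernel_le ha hz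
    _ = (∫⁻ z in Ω, F (z - w)) + volume Ω := by
        rw [lintegral_add_right _ measurable_const, setLIntegral_one]
    _ ≤ (∫⁻ z, F (z - w)) + volume Ω := by
        gcongr
        exact Measure.restrict_le_self
    _ = (∫⁻ u, F u) + volume Ω := by rw [lintegral_sub_right_eq_self F w]
    _ = (∫⁻ u in Metric.ball (0:ℂ) 1,
        ENNReal.ofReal (‖u‖ ^ (-(a * (2/Real.pi))))) + volume Ω := by
        rw [hF, lintegral_indicator measurableSet_ball _]

lemma main_aux (Ω : Set ℂ) (hΩbdd : Bornology.IsBounded Ω)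
    (g : ℂ → ℝ) (hgm : Measurable g) (hg : Integrable g)
    (q : ℝ) (hq : 0 < q) (hq2 : q < Real.pi / (∫ w, |g w|)) :
    MemLp (fun z : ℂ => Real.exp |∫ w, logKernel (z - w) * g w|)
      (ENNReal.ofReal q) (volume.restrict Ω) := by
  set M : ℝ := ∫ w, |g w| with hMdef
  have hM0 : 0 ≤ M := integral_nonneg fun w => abs_nonneg _
  have hM : 0 < M := by
    rcases hM0.lt_or_eq with h | h
    · exact h
    · exfalso
      rw [← h] at hq2
      rw [show Real.pi / 0 = 0 from div_zero _] at hq2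
      exact absurd (hq.trans hq2) (lt_irrefl 0)
  set a : ℝ := q * M with hadef
  have ha : 0 ≤ a := by positivity
  have haπ : a < Real.pi := by rw [lt_div_iff₀ hM] at hq2; exact hq2
  have hβ0 : (0:ℝ) ≤ a * (2 / Real.pi) := by positivity
  have hβ2 : a * (2 / Real.pi) < 2 := by
    have h2π : (0:ℝ) < 2 / Real.pi := by positivity
    have h2 : Real.pi * (2 / Real.pi) = 2 := by field_simp
    nlinarith [mul_lt_mul_of_pos_right haπ h2π]
  -- the weighted measure
  set ν : Measure ℂ := volume.withDensity (fun w => (‖g w‖₊ : ℝ≥0∞)) with hνdef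
  have hlg : ∫⁻ w, (‖g w‖₊ : ℝ≥0∞) = ENNReal.ofReal M := by
    rw [hMdef, ofReal_integral_eq_lintegral_ofReal hg.abs
      (Filter.Eventually.of_forall fun w => abs_nonneg _)]
    exact lintegral_congr fun w => Real.enorm_eq_ofReal_abs _
  have hνuniv : ν Set.univ = ENNReal.ofReal M := by
    rw [hνdef, withDensity_apply _ MeasurableSet.univ, Measure.restrict_univ, hlg]
  haveI hfinν : IsFiniteMeasure ν := ⟨by rw [hνuniv]; exact ENNReal.ofReal_lt_top⟩
  haveI hneν : NeZero ν := ⟨by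
    intro h0
    rw [h0] at hνuniv
    simp only [Measure.coe_zero, Pi.zero_apply] at hνuniv
    exact absurd hνuniv.symm (by simpa using (ENNReal.ofReal_pos.mpr hM).ne')⟩
  have hK := measurable_logKernel
  have hKz : ∀ z : ℂ, Measurable fun w : ℂ => logKernel (z - w) :=
    fun z => hK.comp (measurable_const.sub measurable_id)
  have hKz' : ∀ w : ℂ, Measurable fun z : ℂ => logKernel (z - w) :=
    fun w => hK.comp (measurable_id.sub measurable_const)
  have hprodmeas : Measurable fun p : ℂ × ℂ =>
      ENNReal.ofReal (Real.exp (a * logKernel (p.1 - p.2))) * (‖g p.2‖₊ : ℝ≥0∞) :=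
    (((hK.comp (measurable_fst.sub measurable_snd)).const_mul a).exp.ennreal_ofReal).mul
      ((hgm.comp measurable_snd).enorm)
  set inner : ℂ → ℝ≥0∞ := fun z =>
    ∫⁻ w, ENNReal.ofReal (Real.exp (a * logKernel (z - w))) * (‖g w‖₊ : ℝ≥0∞) with hinnerdef
  have hinner_meas : Measurable inner := hprodmeas.lintegral_prod_right'
  have hΩvol : volume Ω < ∞ := hΩbdd.measure_lt_top
  set C' : ℝ≥0∞ := (∫⁻ u in Metric.ball (0:ℂ) 1,
      ENNReal.ofReal (‖u‖ ^ (-(a * (2/Real.pi))))) + volume Ω with hC'def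
  have hC' : C' < ∞ :=
    ENNReal.add_lt_top.mpr ⟨lintegral_ball_rpow_lt_top hβ0 hβ2, hΩvol⟩
  have hTbound : (∫⁻ z in Ω, inner z) < ∞ := by
    rw [hinnerdef]
    rw [lintegral_lintegral_swap hprodmeas.aemeasurable]
    calc ∫⁻ w, ∫⁻ z in Ω, ENNReal.ofReal (Real.exp (a * logKernel (z - w))) * ‖g w‖₊
        ≤ ∫⁻ w, C' * ‖g w‖₊ := by
          refine lintegral_mono fun w => ?_
          rw [lintegral_mul_const _ (((hKz' w).const_mul a).exp.ennreal_ofReal)]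
          exact mul_le_mul_left (inner_bound ha Ω w) _
      _ = C' * ENNReal.ofReal M := by rw [lintegral_const_mul _ hgm.nnnorm.coe_nnreal_ennreal, hlg]
      _ < ∞ := ENNReal.mul_lt_top hC' ENNReal.ofReal_lt_top
  have hae_fin : ∀ᵐ z ∂(volume.restrict Ω), inner z < ∞ :=
    ae_lt_top hinner_meas hTbound.ne
  -- pointwise (a.e.) Jensen bound
  have key : ∀ᵐ z ∂(volume.restrict Ω),
      ENNReal.ofReal (Real.exp (q * |∫ w, logKernel (z - w) * g w|)) ≤
        ENNReal.ofReal M⁻¹ * inner z := by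
    filter_upwards [hae_fin] with z hz
    have hExpMeas : Measurable fun w : ℂ => Real.exp (a * logKernel (z - w)) :=
      ((hKz z).const_mul a).exp
    have hlint : ∫⁻ w, (‖Real.exp (a * logKernel (z - w))‖₊ : ℝ≥0∞) ∂ν = inner z := by
      rw [hνdef, lintegral_withDensity_eq_lintegral_mul _ hgm.nnnorm.coe_nnreal_ennreal hExpMeas.nnnorm.coe_nnreal_ennreal]
      refine lintegral_congr fun w => ?_
      simp only [Pi.mul_apply]
      rw [mul_comm]; exact congrArg (· * _) (Real.enorm_eq_ofReal (Real.exp_pos _).le)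
    have hI2 : Integrable (fun w => Real.exp (a * logKernel (z - w))) ν := by
      refine ⟨hExpMeas.aestronglyMeasurable, ?_⟩
      show (∫⁻ w, (‖Real.exp (a * logKernel (z - w))‖₊ : ℝ≥0∞) ∂ν) < ∞
      rw [hlint]; exact hz
    have hI1 : Integrable (fun w => a * logKernel (z - w)) ν := by
      refine hI2.mono ((hKz z).const_mul a).aestronglyMeasurable
        (Filter.Eventually.of_forall fun w => ?_)
      rw [Real.norm_eq_abs, Real.norm_eq_abs, abs_of_nonneg (Real.exp_pos _).le,
        abs_of_nonneg (mul_nonneg ha (logKernel_nonneg _))]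
      have := Real.add_one_le_exp (a * logKernel (z - w)); linarith
    have hJen := convexOn_exp.map_average_le Real.continuous_exp.continuousOn isClosed_univ
      (Filter.Eventually.of_forall fun w => Set.mem_univ _) hI1 hI2
    have havg : ∀ F : ℂ → ℝ, ⨍ w, F w ∂ν = M⁻¹ * ∫ w, F w ∂ν := by
      intro F
      rw [average_eq, measureReal_def, hνuniv, ENNReal.toReal_ofReal hM0, smul_eq_mul]
    have hsub : |∫ w, logKernel (z - w) * g w| ≤ ∫ w, logKernel (z - w) * |g w| :=
      calc |∫ w, logKernel (z - w) * g w| = ‖∫ w, logKernel (z - w) * g w‖ :=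
            (Real.norm_eq_abs _).symm
        _ ≤ ∫ w, ‖logKernel (z - w) * g w‖ := norm_integral_le_integral_norm _
        _ = ∫ w, logKernel (z - w) * |g w| :=
            integral_congr_ae (Filter.Eventually.of_forall fun w => by
              show ‖logKernel (z - w) * g w‖ = logKernel (z - w) * |g w|
              rw [Real.norm_eq_abs, abs_mul, abs_of_nonneg (logKernel_nonneg _)])
    have hwd : ∫ w, logKernel (z - w) * |g w| = ∫ w, logKernel (z - w) ∂ν := by
      rw [hνdef, integral_withDensity_eq_integral_smul hgm.nnnorm]
      refine integral_congr_ae (Filter.Eventually.of_forall fun w => ?_)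
      show logKernel (z - w) * |g w| = ‖g w‖₊ • logKernel (z - w)
      rw [NNReal.smul_def, smul_eq_mul, coe_nnnorm, Real.norm_eq_abs, mul_comm]
    have hchain : q * |∫ w, logKernel (z - w) * g w| ≤ ⨍ w, a * logKernel (z - w) ∂ν := by
      rw [havg]
      have hsm : ∫ w, a * logKernel (z - w) ∂ν = a * ∫ w, logKernel (z - w) ∂ν := by
        rw [show (fun w : ℂ => a * logKernel (z - w)) = fun w : ℂ => a • logKernel (z - w) by
          ext w; rw [smul_eq_mul], integral_smul, smul_eq_mul]
      rw [hsm]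
      have h1 : q * |∫ w, logKernel (z - w) * g w| ≤ q * ∫ w, logKernel (z - w) ∂ν := by
        rw [← hwd]; exact mul_le_mul_of_nonneg_left hsub hq.le
      have h2 : M⁻¹ * (a * ∫ w, logKernel (z - w) ∂ν) = q * ∫ w, logKernel (z - w) ∂ν := by
        rw [hadef]; field_simp
      linarith
    have hexp : Real.exp (q * |∫ w, logKernel (z - w) * g w|) ≤
        M⁻¹ * ∫ w, Real.exp (a * logKernel (z - w)) ∂ν := by
      refine ((Real.exp_le_exp.mpr hchain).trans hJen).trans_eq ?_
      exact havg _
    have hofint : ENNReal.ofReal (∫ w, Real.exp (a * logKernel (z - w)) ∂ν) = inner z := by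
      rw [ofReal_integral_eq_lintegral_ofReal hI2
        (Filter.Eventually.of_forall fun w => (Real.exp_pos _).le), ← hlint]
      exact lintegral_congr fun w => (Real.enorm_eq_ofReal (Real.exp_pos _).le).symm
    calc ENNReal.ofReal (Real.exp (q * |∫ w, logKernel (z - w) * g w|))
        ≤ ENNReal.ofReal (M⁻¹ * ∫ w, Real.exp (a * logKernel (z - w)) ∂ν) :=
          ENNReal.ofReal_le_ofReal hexp
      _ = ENNReal.ofReal M⁻¹ * ENNReal.ofReal (∫ w, Real.exp (a * logKernel (z - w)) ∂ν) :=
          ENNReal.ofReal_mul (inv_nonneg.mpr hM0)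
      _ = ENNReal.ofReal M⁻¹ * inner z := by rw [hofint]
  constructor
  · have hp : AEStronglyMeasurable (fun p : ℂ × ℂ => logKernel (p.1 - p.2) * g p.2)
        ((volume.restrict Ω).prod volume) :=
      ((hK.comp (measurable_fst.sub measurable_snd)).mul (hgm.comp measurable_snd)).aestronglyMeasurable
    have hconv : AEStronglyMeasurable (fun z => ∫ w, logKernel (z - w) * g w)
        (volume.restrict Ω) := hp.integral_prod_right'
    have := Real.continuous_exp.comp_aestronglyMeasurable hconv.norm
    simpa [Real.norm_eq_abs] using this
  · rw [eLpNorm_eq_lintegral_rpow_enorm_toReal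
      (by simpa [ENNReal.ofReal_eq_zero] using hq : ENNReal.ofReal q ≠ 0) ENNReal.ofReal_ne_top]
    refine ENNReal.rpow_lt_top_of_nonneg (by positivity) ?_
    rw [ENNReal.toReal_ofReal hq.le]
    refine ne_of_lt ?_
    have heq : ∀ z : ℂ, ((‖Real.exp |∫ w, logKernel (z - w) * g w|‖₊ : ℝ≥0∞)) ^ q =
        ENNReal.ofReal (Real.exp (q * |∫ w, logKernel (z - w) * g w|)) := by
      intro z
      rw [← enorm_eq_nnnorm, Real.enorm_eq_ofReal (Real.exp_pos _).le,
        ENNReal.ofReal_rpow_of_pos (Real.exp_pos _), ← Real.exp_mul,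
        mul_comm |∫ w, logKernel (z - w) * g w| q]
    calc ∫⁻ z in Ω, ((‖Real.exp |∫ w, logKernel (z - w) * g w|‖₊ : ℝ≥0∞)) ^ q
        = ∫⁻ z in Ω, ENNReal.ofReal (Real.exp (q * |∫ w, logKernel (z - w) * g w|)) :=
          lintegral_congr fun z => heq z
      _ ≤ ∫⁻ z in Ω, ENNReal.ofReal M⁻¹ * inner z := lintegral_mono_ae key
      _ = ENNReal.ofReal M⁻¹ * ∫⁻ z in Ω, inner z := lintegral_const_mul _ hinner_meas
      _ < ∞ := ENNReal.mul_lt_top ENNReal.ofReal_lt_top hTbound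

/-- If `g ∈ L¹(Ω)` for a bounded open set `Ω ⊂ ℂ` (extended by zero to ℂ), and
`f(z) = -(2/π) log|z|` for `|z| < 1`, `f(z) = 0` otherwise, then for every
`0 < q < π/‖g‖₁` the function `exp |f ∗ g|` belongs to `L^q(Ω)`. -/
theorem stmt_4 (Ω : Set ℂ) (hΩopen : IsOpen Ω) (hΩbdd : Bornology.IsBounded Ω)
    (g : ℂ → ℝ) (hg : Integrable g) (hsupp : Function.support g ⊆ Ω) :
    ∀ q : ℝ, 0 < q → q < Real.pi / (∫ w, |g w|) →
      MemLp (fun z : ℂ => Real.exp |∫ w, logKernel (z - w) * g w|)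
        (ENNReal.ofReal q) (volume.restrict Ω) := by
  intro q hq hq2
  set g' : ℂ → ℝ := hg.1.mk g with hg'def
  have hgg' : g =ᵐ[volume] g' := hg.1.ae_eq_mk
  have hg'meas : Measurable g' := hg.1.stronglyMeasurable_mk.measurable
  have hIg' : Integrable g' := hg.congr hgg'
  have hMeq : (∫ w, |g w|) = ∫ w, |g' w| :=
    integral_congr_ae (hgg'.mono fun w h => by simp only []; rw [h])
  have hconv : ∀ z : ℂ, (∫ w, logKernel (z - w) * g w) = ∫ w, logKernel (z - w) * g' w :=
    fun z => integral_congr_ae (hgg'.mono fun w h => by simp only []; rw [h])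
  have hfun : (fun z : ℂ => Real.exp |∫ w, logKernel (z - w) * g w|) =
      fun z : ℂ => Real.exp |∫ w, logKernel (z - w) * g' w| :=
    funext fun z => by rw [hconv z]
  rw [hfun]
  exact main_aux Ω hΩbdd g' hg'meas hIg' q hq (by rwa [← hMeq])
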